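/- Let p ≥ 1 be an integer and U₀ ∈ ℂ^{m×ℓ} with ε := ‖E_ℓ(U₀)‖ < 1. Define U_{i+1} = U_i(I_ℓ + Ω_{i,p}) with Ω_{i,p} = s_p(E_ℓ(U_i)) for i ≥ 0. Then for all i ≥ 0, ‖Ω_{i,p}‖ ≤ (−1 + (1−ε)^{−1/2})·ε^{(p+1)^i − 1}. -/

import Mathlib

open Matrix Filter
open scoped BigOperators ComplexOrder

/-- Row-sum norm `‖A‖₁ = max_i ∑_j |A i j|`. -/
noncomputable def rowNorm {a b : ℕ} (A : Matrix (Fin a) (Fin b) ℂ) : ℝ :=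
  ⨆ i, ∑ j, ‖A i j‖

/-- The matrix norm `‖A‖ = max (‖A‖₁, ‖Aᴴ‖₁)` used throughout. -/
noncomputable def mnorm {a b : ℕ} (A : Matrix (Fin a) (Fin b) ℂ) : ℝ :=
  max (rowNorm A) (rowNorm Aᴴ)

/-- The `ℓ × q` diagonal matrix with real diagonal entries `σ`. -/
noncomputable def diagMat (l q : ℕ) (σ : Fin q → ℝ) : Matrix (Fin l) (Fin q) ℂ :=
  fun i j => if (i : ℕ) = (j : ℕ) then (σ j : ℂ) else 0

/-- `κ(Σ) = max (1, max_i 1/σ_i, max_{i≠j} (1/|σ_i−σ_j| + 1/(σ_i+σ_j)))`. -/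
noncomputable def kappa {q : ℕ} (σ : Fin q → ℝ) : ℝ :=
  max 1 (max (⨆ i, 1 / σ i)
    (⨆ i, ⨆ j, if i ≠ j then 1 / |σ i - σ j| + 1 / (σ i + σ j) else 0))

/-- `K(Σ) = max (1, max_i σ_i)`. -/
noncomputable def Kbig {q : ℕ} (σ : Fin q → ℝ) : ℝ :=
  max 1 (⨆ i, σ i)

/-- `s_p(u) = ∑_{k=1}^p (−1)^k t_k u^k`, `t_k = C(2k,k)/4^k`, the degree-`p`
truncation of the Taylor series of `−1+(1+u)^{−1/2}` at `0`. -/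
noncomputable def spReal (p : ℕ) (u : ℝ) : ℝ :=
  ∑ k ∈ Finset.Icc 1 p, (-1 : ℝ) ^ k * ((Nat.choose (2 * k) k : ℝ) / 4 ^ k) * u ^ k

/-- The matrix polynomial `s_p(A)`. -/
noncomputable def spMat {l : ℕ} (p : ℕ) (A : Matrix (Fin l) (Fin l) ℂ) :
    Matrix (Fin l) (Fin l) ℂ :=
  ∑ k ∈ Finset.Icc 1 p, ((-1 : ℂ) ^ k * ((Nat.choose (2 * k) k : ℂ) / 4 ^ k)) • A ^ k

/-!
The Gram error `E = UᴴU - 1` is Hermitian, so on it and on `s_p(E)` the norm `mnorm` is the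
`ℓ∞` operator norm, a submultiplicative algebra norm. Writing `G_p(u) = ∑_{k ≤ p} t_k u^k` for the
truncated Taylor series of `(1 - u)^{-1/2}`, one step maps `E` to `R_p(-E)` with
`R_p = G_p² (1 - X) - 1`. Since `∑_{i+j=k} t_i t_j = 1`, the coefficients of `G_p²` equal `1` up to
degree `p` and then decrease, so the coefficients of `R_p` vanish below degree `p + 1` and their
absolute values add up to at most `1`. Hence `‖E_{i+1}‖ ≤ ‖E_i‖^{p+1}`, i.e.
`‖E_i‖ ≤ ε^{(p+1)^i}`. Finally `‖s_p(E)‖ ≤ G_p(‖E‖) - 1`, which is at most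
`ε^{(p+1)^i - 1} (G_p(ε) - 1)`, and `G_p(ε)² ≤ ∑_k ε^k ≤ (1 - ε)⁻¹`.
-/

open Finset Matrix Polynomial

attribute [local instance] Matrix.linftyOpNormedAddCommGroup Matrix.linftyOpNormedRing
  Matrix.linftyOpNormedAlgebra

lemma rowNorm_eq_norm {a b : ℕ} (A : Matrix (Fin a) (Fin b) ℂ) : rowNorm A = ‖A‖ := by
  rw [linfty_opNorm_def, rowNorm]
  rcases isEmpty_or_nonempty (Fin a) with _ | _
  · simp
  · rw [Finset.sup_univ_eq_ciSup, NNReal.coe_iSup]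
    simp [NNReal.coe_sum]

lemma mnorm_eq_norm_of_isHermitian {l : ℕ} {A : Matrix (Fin l) (Fin l) ℂ} (hA : A.IsHermitian) :
    mnorm A = ‖A‖ := by
  rw [mnorm, hA.eq, max_self, rowNorm_eq_norm]

lemma sum_range_succ_eq_add_sum_Icc {M : Type*} [AddCommMonoid M] (f : ℕ → M) (p : ℕ) :
    ∑ k ∈ range (p + 1), f k = f 0 + ∑ k ∈ Icc 1 p, f k := by
  rw [range_eq_Ico, sum_eq_sum_Ico_succ_bot (Nat.succ_pos p), zero_add,
    Nat.succ_eq_add_one, Ico_add_one_right_eq_Icc]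

lemma sum_Icc_mul_pow_le {a : ℕ → ℝ} (ha : ∀ k, 0 ≤ a k) (p : ℕ) {u c x : ℝ} (hu : 0 ≤ u)
    (hc₀ : 0 ≤ c) (hc₁ : c ≤ 1) (hx : 0 ≤ x) (hux : u ≤ c * x) :
    ∑ k ∈ Icc 1 p, a k * u ^ k ≤ c * ∑ k ∈ Icc 1 p, a k * x ^ k := by
  rw [mul_sum]
  refine sum_le_sum fun k hk => ?_
  have hk : k ≠ 0 := by have := (mem_Icc.mp hk).1; omega
  calc a k * u ^ k ≤ a k * (c * x) ^ k := by gcongr; exact ha k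
    _ = c ^ k * (a k * x ^ k) := by ring
    _ ≤ c * (a k * x ^ k) :=
      mul_le_mul_of_nonneg_right (pow_le_of_le_one hc₀ hc₁ hk) (mul_nonneg (ha k) (pow_nonneg hx k))

namespace Polynomial

lemma coeff_nonneg_of_antitone {f : ℝ[X]} (hf : Antitone f.coeff) (k : ℕ) : 0 ≤ f.coeff k := by
  have h := hf (le_max_left k (f.natDegree + 1))
  rwa [coeff_eq_zero_of_natDegree_lt ((Nat.lt_succ_self _).trans_le (le_max_right _ _))] at h

lemma coeff_sq_succ_le_of_antitone {f : ℝ[X]} (hf : Antitone f.coeff) {k : ℕ}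
    (hk : f.natDegree ≤ k) : (f ^ 2).coeff (k + 1) ≤ (f ^ 2).coeff k := by
  rw [sq, coeff_mul, coeff_mul, Nat.sum_antidiagonal_succ,
    coeff_eq_zero_of_natDegree_lt (Nat.lt_succ_of_le hk), mul_zero, zero_add]
  exact sum_le_sum fun x _ =>
    mul_le_mul_of_nonneg_right (hf (Nat.le_succ _)) (coeff_nonneg_of_antitone hf _)

lemma norm_aeval_le_sum_abs_coeff_mul_pow {A : Type*} [SeminormedRing A] [NormedAlgebra ℝ A]
    (x : A) {f : ℝ[X]} (hf : f.coeff 0 = 0) {n : ℕ} (hn : f.natDegree < n) :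
    ‖aeval x f‖ ≤ ∑ k ∈ range n, |f.coeff k| * ‖x‖ ^ k := by
  rw [aeval_eq_sum_range' hn]
  refine (norm_sum_le _ _).trans (sum_le_sum fun k _ => ?_)
  rw [norm_smul, Real.norm_eq_abs]
  rcases k.eq_zero_or_pos with rfl | hk
  · simp [hf]
  · exact mul_le_mul_of_nonneg_left (norm_pow_le' x hk) (abs_nonneg _)

lemma isSelfAdjoint_aeval {A : Type*} [Ring A] [StarRing A] [Algebra ℝ A] [StarModule ℝ A] {x : A}
    (hx : IsSelfAdjoint x) (f : ℝ[X]) : IsSelfAdjoint (aeval x f) := by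
  rw [aeval_eq_sum_range]
  exact isSelfAdjoint_sum _ fun k _ => (IsSelfAdjoint.all _).smul (hx.pow k)

end Polynomial

/-- `t_k`, the `k`-th Taylor coefficient of `(1 - u)^(-1/2)` at `0`. -/
noncomputable def invSqrtCoeff (k : ℕ) : ℝ := (Nat.choose (2 * k) k : ℝ) / 4 ^ k

lemma invSqrtCoeff_nonneg (k : ℕ) : 0 ≤ invSqrtCoeff k := by unfold invSqrtCoeff; positivity

lemma succ_mul_invSqrtCoeff_succ (k : ℕ) :
    (k + 1 : ℝ) * invSqrtCoeff (k + 1) = (k + 1 / 2 : ℝ) * invSqrtCoeff k := by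
  have h : ((k + 1 : ℕ) * Nat.centralBinom (k + 1) : ℝ) = 2 * (2 * k + 1) * Nat.centralBinom k := by
    exact_mod_cast Nat.succ_mul_centralBinom_succ k
  push_cast at h
  simp only [invSqrtCoeff, ← Nat.centralBinom_eq_two_mul_choose, pow_succ]
  field_simp
  linear_combination 2 * h

lemma invSqrtCoeff_antitone : Antitone invSqrtCoeff := by
  refine antitone_nat_of_succ_le fun k => ?_
  have h := succ_mul_invSqrtCoeff_succ k
  nlinarith [invSqrtCoeff_nonneg k, invSqrtCoeff_nonneg (k + 1)]

lemma sum_antidiagonal_cast_add_mul (n : ℕ) (f : ℕ × ℕ → ℝ) :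
    ∑ x ∈ antidiagonal n, (x.1 + x.2 : ℝ) * f x = n * ∑ x ∈ antidiagonal n, f x := by
  rw [mul_sum]
  exact sum_congr rfl fun x hx => by rw [← mem_antidiagonal.mp hx]; push_cast; ring

lemma sum_antidiagonal_invSqrtCoeff (k : ℕ) :
    ∑ x ∈ antidiagonal k, invSqrtCoeff x.1 * invSqrtCoeff x.2 = 1 := by
  induction k with
  | zero => simp [invSqrtCoeff]
  | succ k ih =>
    set t := invSqrtCoeff
    -- Split the weight `k + 1 = i + j` and apply the recurrence to `t_i`, resp. `t_j`.
    have fst : ∑ x ∈ antidiagonal (k + 1), (x.1 : ℝ) * (t x.1 * t x.2)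
        = ∑ x ∈ antidiagonal k, (x.1 + 1 / 2 : ℝ) * (t x.1 * t x.2) := by
      rw [Nat.sum_antidiagonal_succ]
      simp only [CharP.cast_eq_zero, zero_mul, zero_add, Nat.cast_add, Nat.cast_one]
      exact sum_congr rfl fun x _ => by rw [← mul_assoc, succ_mul_invSqrtCoeff_succ]; ring
    have snd : ∑ x ∈ antidiagonal (k + 1), (x.2 : ℝ) * (t x.1 * t x.2)
        = ∑ x ∈ antidiagonal k, (x.2 + 1 / 2 : ℝ) * (t x.1 * t x.2) := by
      rw [Nat.sum_antidiagonal_succ']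
      simp only [CharP.cast_eq_zero, zero_mul, zero_add, Nat.cast_add, Nat.cast_one]
      exact sum_congr rfl fun x _ => by rw [mul_left_comm, succ_mul_invSqrtCoeff_succ]; ring
    have key : ((k + 1 : ℕ) : ℝ) * ∑ x ∈ antidiagonal (k + 1), t x.1 * t x.2
        = ((k + 1 : ℕ) : ℝ) * ∑ x ∈ antidiagonal k, t x.1 * t x.2 :=
      calc _ = ∑ x ∈ antidiagonal (k + 1), (x.1 + x.2 : ℝ) * (t x.1 * t x.2) :=
            (sum_antidiagonal_cast_add_mul _ _).symm
        _ = ∑ x ∈ antidiagonal (k + 1), (x.1 : ℝ) * (t x.1 * t x.2)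
            + ∑ x ∈ antidiagonal (k + 1), (x.2 : ℝ) * (t x.1 * t x.2) := by
          rw [← sum_add_distrib]; simp only [add_mul]
        _ = ∑ x ∈ antidiagonal k, ((x.1 + x.2 : ℝ) * (t x.1 * t x.2) + t x.1 * t x.2) := by
          rw [fst, snd, ← sum_add_distrib]
          exact sum_congr rfl fun x _ => by ring
        _ = _ := by rw [sum_add_distrib, sum_antidiagonal_cast_add_mul, Nat.cast_succ, add_one_mul]
    rw [mul_left_cancel₀ (by positivity) key, ih]

/-- `G_p`, the degree-`p` truncation of the Taylor series of `(1 - u)^(-1/2)` at `0`. -/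
noncomputable def invSqrtTrunc (p : ℕ) : ℝ[X] := ∑ k ∈ range (p + 1), C (invSqrtCoeff k) * X ^ k

lemma coeff_invSqrtTrunc (p k : ℕ) :
    (invSqrtTrunc p).coeff k = if k ≤ p then invSqrtCoeff k else 0 := by
  simp [invSqrtTrunc, coeff_C_mul, coeff_X_pow]

lemma natDegree_invSqrtTrunc_le (p : ℕ) : (invSqrtTrunc p).natDegree ≤ p :=
  natDegree_sum_le_of_forall_le _ _ fun _ hk =>
    (natDegree_C_mul_X_pow_le _ _).trans (Nat.lt_succ_iff.mp (mem_range.mp hk))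

lemma eval_invSqrtTrunc (p : ℕ) (u : ℝ) :
    (invSqrtTrunc p).eval u = 1 + ∑ k ∈ Icc 1 p, invSqrtCoeff k * u ^ k := by
  simp [invSqrtTrunc, eval_finsetSum, sum_range_succ_eq_add_sum_Icc, invSqrtCoeff]

lemma coeff_invSqrtTrunc_antitone (p : ℕ) : Antitone (invSqrtTrunc p).coeff := by
  refine antitone_nat_of_succ_le fun k => ?_
  simp only [coeff_invSqrtTrunc]
  split_ifs
  · exact invSqrtCoeff_antitone (Nat.le_succ k)
  · omega
  · exact invSqrtCoeff_nonneg k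
  · rfl

lemma coeff_invSqrtTrunc_sq_of_le {p k : ℕ} (hk : k ≤ p) : (invSqrtTrunc p ^ 2).coeff k = 1 := by
  rw [sq, coeff_mul, ← sum_antidiagonal_invSqrtCoeff k]
  refine sum_congr rfl fun x hx => ?_
  have := mem_antidiagonal.mp hx
  rw [coeff_invSqrtTrunc, coeff_invSqrtTrunc, if_pos (by omega), if_pos (by omega)]

lemma coeff_invSqrtTrunc_sq_antitone (p : ℕ) : Antitone (invSqrtTrunc p ^ 2).coeff := by
  refine antitone_nat_of_succ_le fun k => ?_
  rcases lt_or_ge k p with hk | hk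
  · rw [coeff_invSqrtTrunc_sq_of_le hk, coeff_invSqrtTrunc_sq_of_le hk.le]
  · exact coeff_sq_succ_le_of_antitone (coeff_invSqrtTrunc_antitone p)
      ((natDegree_invSqrtTrunc_le p).trans hk)

lemma eval_invSqrtTrunc_le_rpow (p : ℕ) {u : ℝ} (hu₀ : 0 ≤ u) (hu₁ : u < 1) :
    (invSqrtTrunc p).eval u ≤ (1 - u) ^ (-(1 / 2 : ℝ)) := by
  have hsq : (invSqrtTrunc p).eval u ^ 2 ≤ (1 - u)⁻¹ :=
    calc (invSqrtTrunc p).eval u ^ 2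
        = ∑ k ∈ range (2 * p + 1), (invSqrtTrunc p ^ 2).coeff k * u ^ k := by
          rw [← eval_pow, eval_eq_sum_range' (Nat.lt_succ_of_le ?_)]
          exact natDegree_pow_le_of_le 2 (natDegree_invSqrtTrunc_le p)
      _ ≤ ∑ k ∈ range (2 * p + 1), u ^ k := by
          refine sum_le_sum fun k _ => mul_le_of_le_one_left (pow_nonneg hu₀ k) ?_
          rw [← coeff_invSqrtTrunc_sq_of_le (Nat.zero_le p)]
          exact coeff_invSqrtTrunc_sq_antitone p (Nat.zero_le k)
      _ ≤ (1 - u)⁻¹ := by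
          simpa [← range_eq_Ico] using geom_sum_Ico_le_of_lt_one (m := 0) (n := 2 * p + 1) hu₀ hu₁
  have hnonneg : 0 ≤ (invSqrtTrunc p).eval u := by
    rw [eval_eq_sum_range]
    exact sum_nonneg fun k _ =>
      mul_nonneg (coeff_nonneg_of_antitone (coeff_invSqrtTrunc_antitone p) k) (pow_nonneg hu₀ k)
  rw [Real.rpow_neg (by linarith), ← Real.sqrt_eq_rpow, ← Real.sqrt_inv]
  exact Real.le_sqrt_of_sq_le hsq

lemma sum_Icc_invSqrtCoeff_mul_pow_le (p : ℕ) {u : ℝ} (hu₀ : 0 ≤ u) (hu₁ : u < 1) :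
    ∑ k ∈ Icc 1 p, invSqrtCoeff k * u ^ k ≤ -1 + (1 - u) ^ (-(1 / 2 : ℝ)) := by
  have h := eval_invSqrtTrunc_le_rpow p hu₀ hu₁
  rw [eval_invSqrtTrunc] at h
  linarith

/-- `R_p`: one iteration step maps the Gram error `E` to `R_p(-E)`. -/
noncomputable def invSqrtResidual (p : ℕ) : ℝ[X] := invSqrtTrunc p ^ 2 * (1 - X) - 1

lemma coeff_invSqrtResidual_zero (p : ℕ) : (invSqrtResidual p).coeff 0 = 0 := by
  simp [invSqrtResidual, mul_sub, coeff_invSqrtTrunc_sq_of_le (Nat.zero_le p)]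

lemma coeff_invSqrtResidual_succ (p k : ℕ) : (invSqrtResidual p).coeff (k + 1)
    = (invSqrtTrunc p ^ 2).coeff (k + 1) - (invSqrtTrunc p ^ 2).coeff k := by
  simp [invSqrtResidual, mul_sub, coeff_one]

lemma natDegree_invSqrtResidual_lt (p : ℕ) : (invSqrtResidual p).natDegree < 2 * p + 2 := by
  have h := natDegree_invSqrtTrunc_le p
  refine Nat.lt_succ_of_le ?_
  unfold invSqrtResidual
  compute_degree
  omega

lemma sum_abs_coeff_invSqrtResidual_le (p : ℕ) {u : ℝ} (hu₀ : 0 ≤ u) (hu₁ : u ≤ 1) :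
    ∑ k ∈ range (2 * p + 2), |(invSqrtResidual p).coeff k| * u ^ k ≤ u ^ (p + 1) := by
  set β := (invSqrtTrunc p ^ 2).coeff
  have hβ := coeff_invSqrtTrunc_sq_antitone p
  have term : ∀ k, |(invSqrtResidual p).coeff (k + 1)| * u ^ (k + 1)
      ≤ (β k - β (k + 1)) * u ^ (p + 1) := by
    intro k
    rw [coeff_invSqrtResidual_succ, abs_sub_comm,
      abs_of_nonneg (sub_nonneg.2 (hβ (Nat.le_succ k)))]
    rcases lt_or_ge k p with hk | hk
    · simp [β, coeff_invSqrtTrunc_sq_of_le hk, coeff_invSqrtTrunc_sq_of_le hk.le]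
    · exact mul_le_mul_of_nonneg_left (pow_le_pow_of_le_one hu₀ hu₁ (by omega))
        (sub_nonneg.2 (hβ (Nat.le_succ k)))
  calc ∑ k ∈ range (2 * p + 2), |(invSqrtResidual p).coeff k| * u ^ k
      = ∑ k ∈ range (2 * p + 1), |(invSqrtResidual p).coeff (k + 1)| * u ^ (k + 1) := by
        simp [sum_range_succ' _ (2 * p + 1), coeff_invSqrtResidual_zero]
    _ ≤ ∑ k ∈ range (2 * p + 1), (β k - β (k + 1)) * u ^ (p + 1) := sum_le_sum fun k _ => term k
    _ = (1 - β (2 * p + 1)) * u ^ (p + 1) := by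
        rw [← sum_mul, sum_range_sub',
          show β 0 = 1 from coeff_invSqrtTrunc_sq_of_le (Nat.zero_le p)]
    _ ≤ u ^ (p + 1) := mul_le_of_le_one_left (pow_nonneg hu₀ _)
        (sub_le_self _ (coeff_nonneg_of_antitone hβ _))

lemma norm_aeval_invSqrtResidual_le {A : Type*} [SeminormedRing A] [NormedAlgebra ℝ A] (p : ℕ)
    {x : A} (hx : ‖x‖ ≤ 1) : ‖aeval x (invSqrtResidual p)‖ ≤ ‖x‖ ^ (p + 1) :=
  (norm_aeval_le_sum_abs_coeff_mul_pow x (coeff_invSqrtResidual_zero p)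
    (natDegree_invSqrtResidual_lt p)).trans
    (sum_abs_coeff_invSqrtResidual_le p (norm_nonneg x) hx)

lemma one_add_spMat_eq_aeval {l : ℕ} (p : ℕ) (A : Matrix (Fin l) (Fin l) ℂ) :
    1 + spMat p A = aeval (-A) (invSqrtTrunc p) := by
  simp only [invSqrtTrunc, sum_range_succ_eq_add_sum_Icc, map_add, map_sum, map_mul, aeval_C,
    map_pow, aeval_X, spMat]
  congr 1
  · simp [invSqrtCoeff]
  · refine Finset.sum_congr rfl fun k _ => ?_
    rw [← Algebra.smul_def, ← neg_one_smul ℂ A, _root_.smul_pow, ← Complex.coe_smul, smul_smul]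
    congr 1
    push_cast [invSqrtCoeff]
    ring

lemma isHermitian_spMat {l : ℕ} (p : ℕ) {A : Matrix (Fin l) (Fin l) ℂ} (hA : A.IsHermitian) :
    (spMat p A).IsHermitian := by
  rw [isHermitian_iff_isSelfAdjoint, ← add_sub_cancel_left 1 (spMat p A), one_add_spMat_eq_aeval]
  exact (isSelfAdjoint_aeval (isHermitian_iff_isSelfAdjoint.mp hA).neg _).sub (.one _)

lemma norm_spMat_le {l : ℕ} (p : ℕ) (A : Matrix (Fin l) (Fin l) ℂ) :
    ‖spMat p A‖ ≤ ∑ k ∈ Icc 1 p, invSqrtCoeff k * ‖A‖ ^ k := by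
  refine (norm_sum_le _ _).trans (sum_le_sum fun k hk => ?_)
  rw [norm_smul]
  have hnorm : ‖(-1 : ℂ) ^ k * ((Nat.choose (2 * k) k : ℂ) / 4 ^ k)‖ = invSqrtCoeff k := by
    simp [invSqrtCoeff]
  rw [hnorm]
  exact mul_le_mul_of_nonneg_left (norm_pow_le' A (mem_Icc.mp hk).1) (invSqrtCoeff_nonneg k)

lemma isHermitian_gram_sub_one {m l : ℕ} (U : Matrix (Fin m) (Fin l) ℂ) :
    (Uᴴ * U - 1).IsHermitian :=
  (isHermitian_conjTranspose_mul_self U).sub isHermitian_one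

lemma gram_sub_one_eq_aeval_invSqrtResidual {m l : ℕ} (p : ℕ) (U : Matrix (Fin m) (Fin l) ℂ) :
    (U * (1 + spMat p (Uᴴ * U - 1)))ᴴ * (U * (1 + spMat p (Uᴴ * U - 1))) - 1
      = aeval (-(Uᴴ * U - 1)) (invSqrtResidual p) := by
  set E := Uᴴ * U - 1
  have hE : IsSelfAdjoint (-E) :=
    (isHermitian_iff_isSelfAdjoint.mp (isHermitian_gram_sub_one U)).neg
  have hW : (aeval (-E) (invSqrtTrunc p))ᴴ = aeval (-E) (invSqrtTrunc p) :=
    isSelfAdjoint_aeval hE _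
  have hUU : Uᴴ * U = aeval (-E) (1 - X : ℝ[X]) := by simp [E]
  rw [one_add_spMat_eq_aeval, conjTranspose_mul, hW, Matrix.mul_assoc, ← Matrix.mul_assoc Uᴴ, hUU,
    ← map_mul, ← map_mul, invSqrtResidual, map_sub, map_one]
  congr 2
  ring

lemma norm_gram_sub_one_le_pow {m l : ℕ} (p : ℕ) {U : ℕ → Matrix (Fin m) (Fin l) ℂ}
    (h₀ : ‖(U 0)ᴴ * U 0 - 1‖ ≤ 1)
    (hrec : ∀ i, U (i + 1) = U i * (1 + spMat p ((U i)ᴴ * U i - 1))) (i : ℕ) :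
    ‖(U i)ᴴ * U i - 1‖ ≤ ‖(U 0)ᴴ * U 0 - 1‖ ^ (p + 1) ^ i := by
  induction i with
  | zero => simp
  | succ i ih =>
    have hle_one : ‖-((U i)ᴴ * U i - 1)‖ ≤ 1 := by
      rw [norm_neg]; exact ih.trans (pow_le_one₀ (norm_nonneg _) h₀)
    rw [hrec i, gram_sub_one_eq_aeval_invSqrtResidual, pow_succ, pow_mul]
    refine (norm_aeval_invSqrtResidual_le p hle_one).trans ?_
    rw [norm_neg]
    gcongr

theorem omega_bound_along_iteration_general {m l : ℕ} (p : ℕ)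
    (U : ℕ → Matrix (Fin m) (Fin l) ℂ) (ε : ℝ)
    (hε : ε = mnorm ((U 0)ᴴ * U 0 - 1)) (hε1 : ε < 1)
    (hrec : ∀ i, U (i + 1) = U i * (1 + spMat p ((U i)ᴴ * U i - 1))) :
    ∀ i, mnorm (spMat p ((U i)ᴴ * U i - 1)) ≤
      (-1 + (1 - ε) ^ (-(1 / 2 : ℝ))) * ε ^ ((p + 1) ^ i - 1) := by
  intro i
  rw [mnorm_eq_norm_of_isHermitian (isHermitian_gram_sub_one _)] at hε
  have hε₀ : 0 ≤ ε := hε ▸ norm_nonneg _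
  have hgram : ‖(U i)ᴴ * U i - 1‖ ≤ ε ^ ((p + 1) ^ i - 1) * ε := by
    rw [← pow_succ, Nat.sub_add_cancel (Nat.one_le_pow _ _ p.succ_pos), hε]
    exact norm_gram_sub_one_le_pow p (hε ▸ hε1.le) hrec i
  rw [mnorm_eq_norm_of_isHermitian (isHermitian_spMat p (isHermitian_gram_sub_one _)), mul_comm]
  calc _ ≤ ∑ k ∈ Icc 1 p, invSqrtCoeff k * ‖(U i)ᴴ * U i - 1‖ ^ k := norm_spMat_le p _
    _ ≤ ε ^ ((p + 1) ^ i - 1) * ∑ k ∈ Icc 1 p, invSqrtCoeff k * ε ^ k :=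
      sum_Icc_mul_pow_le invSqrtCoeff_nonneg p (norm_nonneg _) (pow_nonneg hε₀ _)
        (pow_le_one₀ hε₀ hε1.le) hε₀ hgram
    _ ≤ _ :=
      mul_le_mul_of_nonneg_left (sum_Icc_invSqrtCoeff_mul_pow_le p hε₀ hε1) (pow_nonneg hε₀ _)

/-- Lemma 3.8: bound on `‖Ω_{i,p}‖` along the iteration. -/
theorem omega_bound_along_iteration {m l : ℕ} (p : ℕ) (hp : 1 ≤ p)
    (U : ℕ → Matrix (Fin m) (Fin l) ℂ) (ε : ℝ)
    (hε : ε = mnorm ((U 0)ᴴ * U 0 - 1)) (hε1 : ε < 1)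
    (hrec : ∀ i, U (i + 1) = U i * (1 + spMat p ((U i)ᴴ * U i - 1))) :
    ∀ i, mnorm (spMat p ((U i)ᴴ * U i - 1)) ≤
      (-1 + (1 - ε) ^ (-(1 / 2 : ℝ))) * ε ^ ((p + 1) ^ i - 1) :=
  omega_bound_along_iteration_general p U ε hε hε1 hrec
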